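/- Fix u, v ∈ (0,1) and 0 < s < t. Then the partial derivative of ψ(s,t;u,v) with respect to t exists and equals ∫₀ᵘ φ(h(w)) · ( Φ⁻¹(v)/(2·√(t·(t−s))) − (√t·Φ⁻¹(v) − √s·Φ⁻¹(w))/(2·(t−s)^{3/2}) ) dw, where h(w) = (√t·Φ⁻¹(v) − √s·Φ⁻¹(w))/√(t−s). -/

import Mathlib

open MeasureTheory Set Filter

/-- Density of the standard normal distribution (φ). -/
noncomputable def stdNormalPDF (x : ℝ) : ℝ := (Real.sqrt (2 * Real.pi))⁻¹ * Real.exp (-x ^ 2 / 2)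

/-- Cumulative distribution function of the standard normal distribution (Φ). -/
noncomputable def stdNormalCDF (x : ℝ) : ℝ := ∫ t in Set.Iic x, stdNormalPDF t

/-- The standard normal quantile function (Φ⁻¹), the inverse of Φ on (0,1). -/
noncomputable def stdNormalCDFInv : ℝ → ℝ := Function.invFun stdNormalCDF

/-- The integrand of the Brownian-copula kernel; the `if` branches encode the
conventions Φ⁻¹(0) = -∞ (so Φ(·) = 0) and Φ⁻¹(1) = +∞ (so Φ(·) = 1). -/
noncomputable def psiIntegrand (s t v w : ℝ) : ℝ :=
  if v ≤ 0 then 0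
  else if 1 ≤ v then 1
  else stdNormalCDF ((Real.sqrt (max s t) * stdNormalCDFInv v -
      Real.sqrt (min s t) * stdNormalCDFInv w) / Real.sqrt |t - s|)

/-- The Brownian-copula kernel ψ(s,t;u,v). -/
noncomputable def psi (s t u v : ℝ) : ℝ :=
  if 0 < |t - s| then ∫ w in (0:ℝ)..u, psiIntegrand s t v w
  else if 0 < t then min u v
  else u * v

/-!
Away from `τ = s` the kernel is `∫₀ᵘ Φ(y_τ(w)) dw` with
`y_τ(w) = (√τ Φ⁻¹(v) - √s Φ⁻¹(w)) / √(τ - s)`, and we differentiate under the integral sign.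
The `τ`-derivative of the integrand is `φ(y) (Φ⁻¹(v) / (2 √(τ (τ - s))) - y / (2 (τ - s)))` at
`y = y_τ(w)`; since `φ ≤ 1` and `|y φ(y)| ≤ 1`, it is bounded uniformly in `w` for `τ` near `t`,
which is the domination needed.
-/

open ProbabilityTheory

lemma MeasurableEmbedding.invFun_eq_function_invFun {α β : Type*} [MeasurableSpace α]
    [MeasurableSpace β] [Nonempty α] {f : α → β} (hf : MeasurableEmbedding f) :
    hf.invFun = Function.invFun f := by
  funext b
  by_cases h : ∃ a, f a = b
  · obtain ⟨a, rfl⟩ := h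
    rw [hf.leftInverse_invFun a, Function.leftInverse_invFun hf.injective a]
  · rw [Function.invFun_neg h, MeasurableEmbedding.invFun, dif_neg (mt mem_range.1 h)]

lemma stdNormalPDF_eq_gaussianPDFReal : stdNormalPDF = gaussianPDFReal 0 1 := by
  ext x
  simp [stdNormalPDF, gaussianPDFReal]

lemma stdNormalPDF_pos (x : ℝ) : 0 < stdNormalPDF x := by
  rw [stdNormalPDF_eq_gaussianPDFReal]
  exact gaussianPDFReal_pos 0 1 x one_ne_zero

@[fun_prop]
lemma continuous_stdNormalPDF : Continuous stdNormalPDF := by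
  unfold stdNormalPDF
  fun_prop

lemma integrable_stdNormalPDF : Integrable stdNormalPDF := by
  rw [stdNormalPDF_eq_gaussianPDFReal]
  exact integrable_gaussianPDFReal 0 1

lemma integral_stdNormalPDF : ∫ x, stdNormalPDF x = 1 := by
  rw [stdNormalPDF_eq_gaussianPDFReal]
  exact integral_gaussianPDFReal_eq_one 0 one_ne_zero

lemma inv_sqrt_two_pi_le_one : (√(2 * Real.pi))⁻¹ ≤ 1 :=
  inv_le_one_of_one_le₀ (Real.one_le_sqrt.2 (by nlinarith [Real.pi_gt_three]))

lemma stdNormalPDF_le_one (x : ℝ) : stdNormalPDF x ≤ 1 :=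
  mul_le_one₀ inv_sqrt_two_pi_le_one (Real.exp_pos _).le
    (Real.exp_le_one_iff.2 (by nlinarith [sq_nonneg x]))

lemma abs_stdNormalPDF_mul_self_le_one (x : ℝ) : |stdNormalPDF x * x| ≤ 1 := by
  have hx : |x| ≤ Real.exp (x ^ 2 / 2) := by
    nlinarith [Real.add_one_le_exp (x ^ 2 / 2), sq_nonneg (|x| - 1), sq_abs x]
  have hexp : Real.exp (-x ^ 2 / 2) * |x| ≤ 1 := by
    rwa [neg_div, Real.exp_neg, inv_mul_le_one₀ (Real.exp_pos _)]
  rw [stdNormalPDF, abs_mul, abs_mul, abs_of_pos (by positivity), abs_of_pos (Real.exp_pos _),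
    mul_assoc]
  exact mul_le_one₀ inv_sqrt_two_pi_le_one (by positivity) hexp

lemma hasDerivAt_stdNormalCDF (x : ℝ) : HasDerivAt stdNormalCDF (stdNormalPDF x) x := by
  have hΦ : stdNormalCDF = fun y => stdNormalCDF 0 + ∫ z in (0 : ℝ)..y, stdNormalPDF z := by
    funext y
    rw [← intervalIntegral.integral_Iic_sub_Iic integrable_stdNormalPDF.integrableOn
      integrable_stdNormalPDF.integrableOn, stdNormalCDF, stdNormalCDF, add_sub_cancel]
  rw [hΦ]
  exact (intervalIntegral.integral_hasDerivAt_right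
    integrable_stdNormalPDF.intervalIntegrable
    (continuous_stdNormalPDF.stronglyMeasurableAtFilter _ _)
    continuous_stdNormalPDF.continuousAt).const_add _

@[fun_prop]
lemma continuous_stdNormalCDF : Continuous stdNormalCDF :=
  continuous_iff_continuousAt.2 fun x => (hasDerivAt_stdNormalCDF x).continuousAt

lemma strictMono_stdNormalCDF : StrictMono stdNormalCDF :=
  strictMono_of_deriv_pos fun x => (hasDerivAt_stdNormalCDF x).deriv ▸ stdNormalPDF_pos x

lemma abs_stdNormalCDF_le_one (x : ℝ) : |stdNormalCDF x| ≤ 1 := by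
  rw [stdNormalCDF, abs_of_nonneg
    (setIntegral_nonneg measurableSet_Iic fun y _ => (stdNormalPDF_pos y).le),
    ← integral_stdNormalPDF]
  exact setIntegral_le_integral integrable_stdNormalPDF
    (Eventually.of_forall fun y => (stdNormalPDF_pos y).le)

/-- Off `(0, 1)` the quantile is a junk constant, so measurability on all of `ℝ` comes from
Lusin–Souslin rather than from monotonicity. -/
@[fun_prop]
lemma measurable_stdNormalCDFInv : Measurable stdNormalCDFInv := by
  have hΦ := continuous_stdNormalCDF.measurableEmbedding strictMono_stdNormalCDF.injective
  rw [stdNormalCDFInv, ← hΦ.invFun_eq_function_invFun]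
  exact hΦ.measurable_invFun

lemma hasDerivAt_stdNormalCDF_comp {s x : ℝ} (a b : ℝ) (hs : 0 ≤ s) (hsx : s < x) :
    HasDerivAt (fun τ => stdNormalCDF ((√τ * a - √s * b) / √(τ - s)))
      (stdNormalPDF ((√x * a - √s * b) / √(x - s)) *
        (a / (2 * √(x * (x - s))) - (√x * a - √s * b) / (2 * √(x - s) ^ 3))) x := by
  have hx : 0 < x := hs.trans_lt hsx
  have hxs : 0 < x - s := sub_pos.2 hsx
  have hnum := ((Real.hasDerivAt_sqrt hx.ne').mul_const a).sub_const (√s * b)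
  have hden := ((hasDerivAt_id' x).sub_const s).sqrt hxs.ne'
  refine ((hasDerivAt_stdNormalCDF _).comp x
    (hnum.div hden (Real.sqrt_pos.2 hxs).ne')).congr_deriv ?_
  rw [Real.sqrt_mul hx.le]
  simp only [Pi.div_apply]
  congr 1
  field_simp

lemma psi_of_ne {s τ : ℝ} (h : τ ≠ s) (u v : ℝ) :
    psi s τ u v = ∫ w in (0 : ℝ)..u, psiIntegrand s τ v w := by
  rw [psi, if_pos (abs_pos.2 (sub_ne_zero.2 h))]

lemma psiIntegrand_of_lt {s τ v : ℝ} (hv : v ∈ Ioo (0 : ℝ) 1) (h : s < τ) (w : ℝ) :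
    psiIntegrand s τ v w =
      stdNormalCDF ((√τ * stdNormalCDFInv v - √s * stdNormalCDFInv w) / √(τ - s)) := by
  rw [psiIntegrand, if_neg (not_le.2 hv.1), if_neg (not_le.2 hv.2), max_eq_right h.le,
    min_eq_left h.le, abs_of_pos (sub_pos.2 h)]

@[fun_prop]
lemma measurable_psiIntegrand (s t v : ℝ) : Measurable (psiIntegrand s t v) := by
  unfold psiIntegrand
  split_ifs <;> fun_prop

lemma abs_psiIntegrand_le_one (s t v w : ℝ) : |psiIntegrand s t v w| ≤ 1 := by
  unfold psiIntegrand
  split_ifs <;> simp [abs_stdNormalCDF_le_one]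

lemma intervalIntegrable_psiIntegrand (s t v a b : ℝ) :
    IntervalIntegrable (psiIntegrand s t v) volume a b :=
  (intervalIntegrable_const (c := (1 : ℝ))).mono_fun'
    (measurable_psiIntegrand s t v).aestronglyMeasurable
    (ae_of_all _ (abs_psiIntegrand_le_one s t v))

noncomputable def psiIntegrandDerivT (s t v w : ℝ) : ℝ :=
  stdNormalPDF ((√t * stdNormalCDFInv v - √s * stdNormalCDFInv w) / √(t - s)) *
    (stdNormalCDFInv v / (2 * √(t * (t - s))) -
      (√t * stdNormalCDFInv v - √s * stdNormalCDFInv w) / (2 * √(t - s) ^ 3))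

lemma hasDerivAt_psiIntegrand {s x v : ℝ} (hv : v ∈ Ioo (0 : ℝ) 1) (hs : 0 ≤ s) (hsx : s < x)
    (w : ℝ) : HasDerivAt (fun τ => psiIntegrand s τ v w) (psiIntegrandDerivT s x v w) x :=
  (hasDerivAt_stdNormalCDF_comp _ _ hs hsx).congr_of_eventuallyEq <| by
    filter_upwards [eventually_gt_nhds hsx] with τ hτ using psiIntegrand_of_lt hv hτ w

@[fun_prop]
lemma measurable_psiIntegrandDerivT (s t v : ℝ) : Measurable (psiIntegrandDerivT s t v) := by
  unfold psiIntegrandDerivT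
  fun_prop

lemma abs_psiIntegrandDerivT_le {s δ x : ℝ} (v w : ℝ) (hs : 0 ≤ s) (hδ : 0 < δ)
    (hx : s + δ ≤ x) :
    |psiIntegrandDerivT s x v w| ≤ (|stdNormalCDFInv v| + 1) / (2 * δ) := by
  set a := stdNormalCDFInv v
  set y := (√x * a - √s * stdNormalCDFInv w) / √(x - s) with hy
  have hxs : 0 < x - s := by linarith
  have hδx : δ ≤ √(x * (x - s)) := Real.le_sqrt_of_sq_le (by nlinarith)
  have hdiv : (√x * a - √s * stdNormalCDFInv w) / (2 * √(x - s) ^ 3) = y / (2 * (x - s)) := by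
    rw [hy, div_div, pow_succ, Real.sq_sqrt hxs.le]
    ring
  have hφ : |stdNormalPDF y * (a / (2 * √(x * (x - s))))| ≤ |a| / (2 * δ) := by
    have hpos : 0 < 2 * √(x * (x - s)) := by linarith
    rw [abs_mul, abs_div, abs_of_pos (stdNormalPDF_pos y), abs_of_pos hpos]
    calc stdNormalPDF y * (|a| / (2 * √(x * (x - s))))
        ≤ |a| / (2 * √(x * (x - s))) :=
          mul_le_of_le_one_left (by positivity) (stdNormalPDF_le_one y)
      _ ≤ |a| / (2 * δ) := by gcongr
  have hφy : |stdNormalPDF y * y / (2 * (x - s))| ≤ 1 / (2 * δ) := by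
    rw [abs_div, abs_of_pos (by linarith : (0 : ℝ) < 2 * (x - s))]
    exact div_le_div₀ zero_le_one (abs_stdNormalPDF_mul_self_le_one y) (by positivity)
      (by linarith)
  calc |psiIntegrandDerivT s x v w|
      = |stdNormalPDF y * (a / (2 * √(x * (x - s)))) - stdNormalPDF y * y / (2 * (x - s))| := by
        rw [psiIntegrandDerivT, hdiv, mul_sub, mul_div_assoc]
    _ ≤ |a| / (2 * δ) + 1 / (2 * δ) := (abs_sub _ _).trans (add_le_add hφ hφy)
    _ = (|a| + 1) / (2 * δ) := by ring

theorem psi_hasDerivAt_t_general (u v s t : ℝ) (hv : v ∈ Set.Ioo (0:ℝ) 1)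
    (hs : 0 < s) (hst : s < t) :
    HasDerivAt (fun τ : ℝ => psi s τ u v)
      (∫ w in (0:ℝ)..u,
        stdNormalPDF ((Real.sqrt t * stdNormalCDFInv v - Real.sqrt s * stdNormalCDFInv w) /
            Real.sqrt (t - s)) *
          (stdNormalCDFInv v / (2 * Real.sqrt (t * (t - s))) -
            (Real.sqrt t * stdNormalCDFInv v - Real.sqrt s * stdNormalCDFInv w) /
              (2 * Real.sqrt (t - s) ^ 3))) t := by
  obtain ⟨δ, hδ, hsδt⟩ : ∃ δ, 0 < δ ∧ s + δ < t := ⟨(t - s) / 2, by linarith, by linarith⟩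
  have hderiv := intervalIntegral.hasDerivAt_integral_of_dominated_loc_of_deriv_le
    (F := fun τ w => psiIntegrand s τ v w) (F' := fun τ w => psiIntegrandDerivT s τ v w)
    (bound := fun _ => (|stdNormalCDFInv v| + 1) / (2 * δ))
    (Ioi_mem_nhds hsδt)
    (Eventually.of_forall fun τ =>
      (measurable_psiIntegrand s τ v).aestronglyMeasurable)
    (intervalIntegrable_psiIntegrand s t v 0 u)
    (measurable_psiIntegrandDerivT s t v).aestronglyMeasurable
    (ae_of_all _ fun w _ x hx => abs_psiIntegrandDerivT_le v w hs.le hδ hx.le)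
    intervalIntegrable_const
    (ae_of_all _ fun w _ x hx => hasDerivAt_psiIntegrand hv hs.le (by linarith [mem_Ioi.1 hx]) w)
  refine hderiv.2.congr_of_eventuallyEq ?_
  filter_upwards [eventually_ne_nhds hst.ne'] with τ hτ using psi_of_ne hτ u v

/-- For u, v ∈ (0,1) and 0 < s < t, the partial derivative of ψ(s,t;u,v) with respect
to t exists and is given by the stated integral formula. -/
theorem psi_hasDerivAt_t (u v s t : ℝ) (hu : u ∈ Set.Ioo (0:ℝ) 1) (hv : v ∈ Set.Ioo (0:ℝ) 1)
    (hs : 0 < s) (hst : s < t) :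
    HasDerivAt (fun τ : ℝ => psi s τ u v)
      (∫ w in (0:ℝ)..u,
        stdNormalPDF ((Real.sqrt t * stdNormalCDFInv v - Real.sqrt s * stdNormalCDFInv w) /
            Real.sqrt (t - s)) *
          (stdNormalCDFInv v / (2 * Real.sqrt (t * (t - s))) -
            (Real.sqrt t * stdNormalCDFInv v - Real.sqrt s * stdNormalCDFInv w) /
              (2 * Real.sqrt (t - s) ^ 3))) t :=
  psi_hasDerivAt_t_general u v s t hv hs hst
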